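/- arXiv:1510.02773 — 2 statements merged into one kernel-verified Lean document; each statement's English description precedes it below -/
import Mathlib

section
/- Define a tower function T : ℕ → ℕ → ℕ by T(0, k) = k and T(n+1, k) = 2^{T(n, k)}. In the group G_n = ⟨x₁, …, x_n | x_{i+1} x_i x_{i+1}⁻¹ = x_i² for 1 ≤ i ≤ n−1⟩, the element g_k defined by the iterated conjugation g_k = x₁^{x₂^{x₃^{⋯^{x_n^k}}}}, where x_i^{x_{i+1}^m} denotes x_{i+1}^m x_i x_{i+1}^{-m} and the tower is evaluated from the top down, satisfies g_k = x₁^{T(n−1, k)}. -/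
/-- Tower of exponentials: `tower 0 k = k`, `tower (n+1) k = 2 ^ tower n k`. -/
def tower : ℕ → ℕ → ℕ
  | 0, k => k
  | n + 1, k => 2 ^ tower n k

/-- The `i`-th generator (0-indexed) of the free group on `n` generators,
or `1` if `i` is out of range. -/
def fgen (n i : ℕ) : FreeGroup (Fin n) :=
  if h : i < n then FreeGroup.of ⟨i, h⟩ else 1

/-- The relators of G_n = ⟨x₁, …, x_n | x_{i+1} x_i x_{i+1}⁻¹ = x_i², 1 ≤ i ≤ n−1⟩,
with x_{j+1} corresponding to the 0-indexed generator `fgen n j`. -/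
def Grel (n : ℕ) : Set (FreeGroup (Fin n)) :=
  {w | ∃ i : ℕ, i + 1 < n ∧
    w = fgen n (i + 1) * fgen n i * (fgen n (i + 1))⁻¹ * (fgen n i ^ 2)⁻¹}

/-- The group G_n. -/
abbrev Gm (n : ℕ) := PresentedGroup (Grel n)

/-- The 0-indexed generators of G_n (trivial when out of range). -/
def xg (n i : ℕ) : Gm n :=
  if h : i < n then PresentedGroup.of ⟨i, h⟩ else 1

/-- The downward recursive sequence: `zseq x n k 0 = x_{n-1}^k` (the top element `y_n`)
and `zseq x n k (j+1) = zseq x n k j * x (n-2-j) * (zseq x n k j)⁻¹`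
(so `zseq x n k j = y_{n-1-j}` where `y_i = y_{i+1} x_i y_{i+1}⁻¹`). -/
def zseq {G : Type} [Group G] (x : ℕ → G) (n k : ℕ) : ℕ → G
  | 0 => x (n - 1) ^ k
  | j + 1 => zseq x n k j * x (n - 2 - j) * (zseq x n k j)⁻¹

/-- g_k = y₁, the iterated conjugation x₁^{x₂^{⋯^{x_n^k}}}. -/
def gElt {G : Type} [Group G] (x : ℕ → G) (n k : ℕ) : G := zseq x n k (n - 1)

lemma xg_rel (n i : ℕ) (h : i + 1 < n) :
    xg n (i + 1) * xg n i * (xg n (i + 1))⁻¹ = xg n i ^ 2 := by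
  have hi : i < n := Nat.lt_of_succ_lt h
  have hmem : fgen n (i + 1) * fgen n i * (fgen n (i + 1))⁻¹ * (fgen n i ^ 2)⁻¹ ∈
      Subgroup.normalClosure (Grel n) :=
    Subgroup.subset_normalClosure ⟨i, h, rfl⟩
  have h1 : PresentedGroup.mk (Grel n)
      (fgen n (i + 1) * fgen n i * (fgen n (i + 1))⁻¹ * (fgen n i ^ 2)⁻¹) = 1 := by
    rw [show (PresentedGroup.mk (Grel n) _ = (1 : Gm n)) ↔ _ from QuotientGroup.eq_one_iff _]
    exact hmem
  have h2 : PresentedGroup.mk (Grel n) (fgen n (i + 1)) = xg n (i + 1) := by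
    simp [fgen, xg, h, PresentedGroup.of]
  have h3 : PresentedGroup.mk (Grel n) (fgen n i) = xg n i := by
    simp [fgen, xg, hi, PresentedGroup.of]
  rw [map_mul, map_mul, map_mul, map_inv, map_inv, map_pow, h2, h3] at h1
  rw [mul_inv_eq_one] at h1
  exact h1

lemma myConjPow {G : Type} [Group G] (a b : G) (h : a * b * a⁻¹ = b ^ 2) (m : ℕ) :
    a ^ m * b * (a ^ m)⁻¹ = b ^ (2 ^ m) := by
  induction m with
  | zero => simp
  | succ m ih =>
    have : a ^ (m + 1) * b * (a ^ (m + 1))⁻¹ = a * (a ^ m * b * (a ^ m)⁻¹) * a⁻¹ := by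
      group
    rw [this, ih, myConjPow_aux a b h (2 ^ m)]
    congr 1
    ring
where
  myConjPow_aux (a b : G) (h : a * b * a⁻¹ = b ^ 2) (t : ℕ) :
      a * b ^ t * a⁻¹ = b ^ (2 * t) := by
    induction t with
    | zero => simp
    | succ t ih =>
      have : a * b ^ (t + 1) * a⁻¹ = (a * b ^ t * a⁻¹) * (a * b * a⁻¹) := by group
      rw [this, ih, h, Nat.mul_succ, pow_add]

lemma zseq_eq (n k : ℕ) (hn : 1 ≤ n) : ∀ j, j ≤ n - 1 →
    zseq (xg n) n k j = xg n (n - 1 - j) ^ tower j k := by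
  intro j
  induction j with
  | zero => intro _; simp [zseq, tower]
  | succ j ih =>
    intro hj
    have hj' : j ≤ n - 1 := Nat.le_of_succ_le hj
    have hjn : j + 2 ≤ n := by omega
    have hsub : n - 2 - j + 1 = n - 1 - j := by omega
    have hlt : n - 2 - j + 1 < n := by omega
    have hrel := xg_rel n (n - 2 - j) hlt
    rw [hsub] at hrel
    have : zseq (xg n) n k (j + 1)
        = zseq (xg n) n k j * xg n (n - 2 - j) * (zseq (xg n) n k j)⁻¹ := rfl
    rw [this, ih hj']
    rw [myConjPow (xg n (n - 1 - j)) (xg n (n - 2 - j))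
      (by rw [← hsub] at hrel ⊢; exact hrel) (tower j k)]
    rw [show n - 1 - (j + 1) = n - 2 - j from by omega]
    rfl

/-- In G_n, the iterated conjugation g_k equals x₁^{tower (n-1) k}. -/
theorem stmt2 (n k : ℕ) (hn : 1 ≤ n) :
    gElt (xg n) n k = xg n 0 ^ tower (n - 1) k := by
  have := zseq_eq n k hn (n - 1) le_rfl
  rw [gElt, this, Nat.sub_self]
end

section
/- For every n ≥ 1, the group presented by P_n = ⟨x₁, …, x_n, t | x_{i+1}x_i x_{i+1}⁻¹ = x_i² for 1 ≤ i ≤ n−1, t v_n t⁻¹ = v_n x_n⟩ is isomorphic to ℤ, generated by the image of t, where v_n = [y₁, x₁] with y_n = x_n^n and y_i = y_{i+1} x_i y_{i+1}⁻¹ for i < n. -/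
open scoped commutatorElement

/-- The word v_n = [g_n, x₁] in the free group on generators x₁, …, x_n, t
(the first n generators being the x's, the last one being t). -/
def vword (n : ℕ) : FreeGroup (Fin (n + 1)) :=
  ⁅gElt (fgen (n + 1)) n n, fgen (n + 1) 0⁆

/-- The relators of P_n = ⟨x₁, …, x_n, t | x_{i+1} x_i x_{i+1}⁻¹ = x_i² (1 ≤ i ≤ n−1),
t v_n t⁻¹ = v_n x_n⟩.  Generator index n is t. -/
def Prel (n : ℕ) : Set (FreeGroup (Fin (n + 1))) :=
  {w | ∃ i : ℕ, i + 1 < n ∧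
      w = fgen (n + 1) (i + 1) * fgen (n + 1) i * (fgen (n + 1) (i + 1))⁻¹ *
            (fgen (n + 1) i ^ 2)⁻¹} ∪
  {fgen (n + 1) n * vword n * (fgen (n + 1) n)⁻¹ * (vword n * fgen (n + 1) (n - 1))⁻¹}

/-! Conjugating `x_i` by `x_{i+1}^m` gives `x_i^(2^m)`, so downward induction makes every `y_i`
a power of `x_i`; hence `y₁` commutes with `x₁`, `v_n = 1`, and the last relation becomes
`x_n = 1`. Then `x_{i+1} = 1` turns `x_{i+1} x_i x_{i+1}⁻¹ = x_i²` into `x_i = 1`, so `P_n` is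
generated by `t`. The exponent sum in `t` kills every relator, so `t` has infinite order. -/

section SquaringChain

variable {G : Type} [Group G]

lemma conj_pow_eq_pow_two_pow {a b : G} (h : a * b * a⁻¹ = b ^ 2) (m : ℕ) :
    a ^ m * b * (a ^ m)⁻¹ = b ^ 2 ^ m := by
  induction m with
  | zero => simp
  | succ m ih =>
    calc a ^ (m + 1) * b * (a ^ (m + 1))⁻¹ = a * (a ^ m * b * (a ^ m)⁻¹) * a⁻¹ := by group
      _ = (a * b * a⁻¹) ^ 2 ^ m := by rw [ih, conj_pow]
      _ = b ^ 2 ^ (m + 1) := by rw [h, ← pow_mul, pow_succ', Nat.mul_comm]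

lemma map_zseq {H : Type} [Group H] (f : G →* H) (x : ℕ → G) (n k j : ℕ) :
    f (zseq x n k j) = zseq (fun i => f (x i)) n k j := by
  induction j with
  | zero => simp [zseq]
  | succ j ih => simp [zseq, ih]

def IsSquaringChain (x : ℕ → G) (n : ℕ) : Prop :=
  ∀ i, i + 1 < n → x (i + 1) * x i * (x (i + 1))⁻¹ = x i ^ 2

variable {x : ℕ → G} {n : ℕ}

lemma exists_zseq_eq_pow (hx : IsSquaringChain x n) (k : ℕ) {j : ℕ} (hj : j ≤ n - 1) :
    ∃ m : ℕ, zseq x n k j = x (n - 1 - j) ^ m := by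
  induction j with
  | zero => exact ⟨k, rfl⟩
  | succ j ih =>
    obtain ⟨m, hm⟩ := ih (by omega)
    have hrel := hx (n - 2 - j) (by omega)
    rw [show n - 2 - j + 1 = n - 1 - j by omega] at hrel
    refine ⟨2 ^ m, ?_⟩
    rw [zseq, hm, conj_pow_eq_pow_two_pow hrel, show n - 1 - (j + 1) = n - 2 - j by omega]

lemma exists_gElt_eq_pow (hx : IsSquaringChain x n) (k : ℕ) :
    ∃ m : ℕ, gElt x n k = x 0 ^ m := by
  simpa [gElt] using exists_zseq_eq_pow hx k le_rfl

lemma eq_one_of_top_eq_one (hx : IsSquaringChain x n) (htop : x (n - 1) = 1)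
    {i : ℕ} (hi : i < n) : x i = 1 := by
  induction (show i ≤ n - 1 by omega) using Nat.decreasingInduction with
  | self => exact htop
  | of_succ k _ ih =>
    have hrel := hx k (by omega)
    rw [ih (by omega), one_mul, inv_one, mul_one, pow_two, left_eq_mul] at hrel
    exact hrel

end SquaringChain

lemma PresentedGroup.exists_mulEquiv_multiplicative_int {α : Type*} {rels : Set (FreeGroup α)}
    (t : α) (φ : PresentedGroup rels →* Multiplicative ℤ)
    (hφ : φ (.of t) = Multiplicative.ofAdd 1)
    (hgen : ∀ a ≠ t, (PresentedGroup.of a : PresentedGroup rels) = 1) :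
    ∃ e : PresentedGroup rels ≃* Multiplicative ℤ, e (.of t) = Multiplicative.ofAdd 1 := by
  let ψ := zpowersHom _ (PresentedGroup.of t : PresentedGroup rels)
  have hψφ : ψ.comp φ = MonoidHom.id _ := PresentedGroup.ext fun a => by
    by_cases ha : a = t
    · subst ha
      simp [ψ, hφ]
    · simp [hgen a ha]
  have hφψ : φ.comp ψ = MonoidHom.id _ := MonoidHom.ext_mint (by simpa [ψ] using hφ)
  exact ⟨MonoidHom.toMulEquiv φ ψ hψφ hφψ, hφ⟩

namespace Prel

variable {n : ℕ}

/-- `gen n i` is `x_{i+1}` for `i < n` and `t` for `i = n`. -/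
abbrev gen (n i : ℕ) : PresentedGroup (Prel n) := PresentedGroup.mk (Prel n) (fgen (n + 1) i)

lemma isSquaringChain_gen : IsSquaringChain (gen n) n := by
  intro i hi
  have h := PresentedGroup.mk_eq_mk_of_mul_inv_mem (rels := Prel n)
    (x := fgen (n + 1) (i + 1) * fgen (n + 1) i * (fgen (n + 1) (i + 1))⁻¹)
    (y := fgen (n + 1) i ^ 2) (Or.inl ⟨i, hi, rfl⟩)
  simpa using h

lemma mk_vword : PresentedGroup.mk (Prel n) (vword n) = 1 := by
  obtain ⟨m, hm⟩ := exists_gElt_eq_pow isSquaringChain_gen n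
  rw [vword, map_commutatorElement, gElt, map_zseq, ← gElt, hm]
  exact commutatorElement_eq_one_iff_commute.mpr ((Commute.refl _).pow_left m)

lemma gen_pred_eq_one : gen n (n - 1) = 1 := by
  have h := PresentedGroup.mk_eq_mk_of_mul_inv_mem (rels := Prel n) (Or.inr rfl)
  simpa [mk_vword] using h.symm

lemma of_eq_one {i : Fin (n + 1)} (hi : i ≠ Fin.last n) :
    (PresentedGroup.of i : PresentedGroup (Prel n)) = 1 := by
  have hin : (i : ℕ) < n := Fin.val_lt_last hi
  have h : gen n i = 1 := eq_one_of_top_eq_one isSquaringChain_gen gen_pred_eq_one hin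
  rwa [gen, fgen, dif_pos i.isLt] at h

abbrev tExponent (n : ℕ) : Fin (n + 1) → Multiplicative ℤ :=
  Pi.mulSingle (Fin.last n) (Multiplicative.ofAdd 1)

lemma lift_tExponent_fgen {i : ℕ} (hi : i < n) :
    FreeGroup.lift (tExponent n) (fgen (n + 1) i) = 1 := by
  simp [fgen, show i < n + 1 by omega, Fin.ext_iff, hi.ne]

lemma lift_tExponent_vword : FreeGroup.lift (tExponent n) (vword n) = 1 := by
  rw [vword, map_commutatorElement]
  exact commutatorElement_eq_one_iff_commute.mpr (by exact Commute.all _ _)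

lemma lift_tExponent_of_mem (hn : 1 ≤ n) {r : FreeGroup (Fin (n + 1))} (hr : r ∈ Prel n) :
    FreeGroup.lift (tExponent n) r = 1 := by
  obtain ⟨i, hi, rfl⟩ | rfl := hr
  · simp [lift_tExponent_fgen (show i < n by omega), lift_tExponent_fgen hi]
  · simp only [map_mul, map_inv, lift_tExponent_vword,
      lift_tExponent_fgen (show n - 1 < n by omega)]
    group

end Prel

/-- The group presented by P_n is infinite cyclic, generated by the image of t. -/
theorem stmt7 (n : ℕ) (hn : 1 ≤ n) :
    ∃ e : PresentedGroup (Prel n) ≃* Multiplicative ℤ,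
      e (PresentedGroup.of ⟨n, n.lt_succ_self⟩) = Multiplicative.ofAdd 1 :=
  PresentedGroup.exists_mulEquiv_multiplicative_int (Fin.last n)
    (PresentedGroup.toGroup fun _ => Prel.lift_tExponent_of_mem hn)
    (by simp [PresentedGroup.toGroup.of]) fun _ => Prel.of_eq_one
end
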